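/- (Quasiprobability decomposition of the identity via NME teleportation.) For every real number k ≥ 0 and every 2×2 complex matrix ρ: ρ = ((k²+1)/(k+1)²) · Σ_{i∈{1,2}} U_i E_tel^{Φ^k}(U_i† ρ U_i) U_i† − ((k−1)²/(k+1)²) · Σ_{j∈{0,1}} Tr[|j⟩⟨j| ρ] · X |j⟩⟨j| X, where U₁ = H and U₂ = S·H. -/

import Mathlib

open Matrix Kronecker

noncomputable section

/-- Standard basis ket |0⟩ of a qubit ℂ². -/
def e0 : Fin 2 → ℂ := ![1, 0]

/-- Standard basis ket |1⟩ of a qubit ℂ². -/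
def e1 : Fin 2 → ℂ := ![0, 1]

/-- The standard basis kets, indexed: |j⟩ for j ∈ {0,1}. -/
def eb : Fin 2 → Fin 2 → ℂ := ![e0, e1]

/-- Tensor (Kronecker) product of two one-qubit vectors. -/
def tens (v w : Fin 2 → ℂ) : Fin 2 × Fin 2 → ℂ := fun p => v p.1 * w p.2

/-- The maximally entangled state |Φ⟩ = (1/√2)(|00⟩ + |11⟩). -/
def ketPhi : Fin 2 × Fin 2 → ℂ :=
  ((1 / Real.sqrt 2 : ℝ) : ℂ) • (tens e0 e0 + tens e1 e1)

/-- The non-maximally entangled state |Φ^k⟩ = K(|00⟩ + k|11⟩), K = 1/√(1+k²). -/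
def ketPhiK (k : ℝ) : Fin 2 × Fin 2 → ℂ :=
  ((1 / Real.sqrt (1 + k ^ 2) : ℝ) : ℂ) • (tens e0 e0 + (k : ℂ) • tens e1 e1)

/-- Density operator |v⟩⟨v| of a pure state. -/
def dens {ι : Type*} (v : ι → ℂ) : Matrix ι ι ℂ := vecMulVec v (star v)

/-- Density operator Φ = |Φ⟩⟨Φ|. -/
def PhiD : Matrix (Fin 2 × Fin 2) (Fin 2 × Fin 2) ℂ := dens ketPhi

/-- Density operator Φ^k = |Φ^k⟩⟨Φ^k|. -/
def PhiKD (k : ℝ) : Matrix (Fin 2 × Fin 2) (Fin 2 × Fin 2) ℂ := dens (ketPhiK k)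

/-- The overlap ⟨v| M |v⟩. -/
def ov {ι : Type*} [Fintype ι] (v : ι → ℂ) (M : Matrix ι ι ℂ) : ℂ :=
  star v ⬝ᵥ M.mulVec v

/-- Pauli X. -/
def Xm : Matrix (Fin 2) (Fin 2) ℂ := !![0, 1; 1, 0]

/-- Pauli Y. -/
def Ym : Matrix (Fin 2) (Fin 2) ℂ := !![0, -Complex.I; Complex.I, 0]

/-- Pauli Z. -/
def Zm : Matrix (Fin 2) (Fin 2) ℂ := !![1, 0; 0, -1]

/-- The Paulis I, X, Y, Z indexed by Fin 4. -/
def pauli : Fin 4 → Matrix (Fin 2) (Fin 2) ℂ := ![1, Xm, Ym, Zm]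

/-- The Bell state |Φ^σ⟩ = (σ ⊗ I)|Φ⟩ for σ the i-th Pauli. -/
def bell (i : Fin 4) : Fin 2 × Fin 2 → ℂ :=
  ((pauli i) ⊗ₖ (1 : Matrix (Fin 2) (Fin 2) ℂ)).mulVec ketPhi

/-- The 2×8 matrix ⟨v| ⊗ I₂ acting on ℂ²⊗ℂ²⊗ℂ² (bra on the first two factors). -/
def braI (v : Fin 2 × Fin 2 → ℂ) : Matrix (Fin 2) (Fin 2 × Fin 2 × Fin 2) ℂ :=
  Matrix.of fun i p => star (v (p.1, p.2.1)) * (if i = p.2.2 then 1 else 0)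

/-- Teleportation Kraus operator K_σ = σ · (⟨Φ^σ| ⊗ I₂). -/
def Kmat (σ : Fin 4) : Matrix (Fin 2) (Fin 2 × Fin 2 × Fin 2) ℂ :=
  pauli σ * braI (bell σ)

/-- Teleportation channel with resource state ρ: E_tel^ρ(φ) = Σ_σ K_σ (φ ⊗ ρ) K_σ†. -/
def Etel (ρ : Matrix (Fin 2 × Fin 2) (Fin 2 × Fin 2) ℂ)
    (φ : Matrix (Fin 2) (Fin 2) ℂ) : Matrix (Fin 2) (Fin 2) ℂ :=
  ∑ σ : Fin 4, Kmat σ * (φ ⊗ₖ ρ) * (Kmat σ)ᴴ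

/-- Hadamard gate. -/
def Hm : Matrix (Fin 2) (Fin 2) ℂ := ((1 / Real.sqrt 2 : ℝ) : ℂ) • !![1, 1; 1, -1]

/-- Phase gate S = diag(1, i). -/
def Sm : Matrix (Fin 2) (Fin 2) ℂ := !![1, 0; 0, Complex.I]

/-!
Teleporting through `|Φ^k⟩` is a dephasing channel `φ ↦ p φ + (1 - p) Z φ Z` with
`p = |⟨Φ|Φ^k⟩|² = (1 + k)² / (2 (1 + k²))`: the Bell measurement turns the resource into the map
`ψ ↦ D ψ D / (1 + k²)`, `D = diag(1, k)`, and the Pauli corrections twirl it. Conjugating by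
`H` and `S H` turns the dephasing axis `Z` into `X` and `Y`, and `X ρ X + Y ρ Y` is twice the
bit-flipped diagonal of `ρ`, which the second term removes.
-/

/-- The linear map whose Choi matrix `∑ |b⟩⟨b'| ⊗ Λ(|b⟩⟨b'|)` is `ρ`. -/
def choiMap {m n : Type*} [Fintype m] (ρ : Matrix (m × n) (m × n) ℂ) (ψ : Matrix m m ℂ) :
    Matrix n n ℂ :=
  Matrix.of fun c c' => ∑ b, ∑ b', ψ b b' * ρ (b, c) (b', c')

lemma ofReal_inv_sqrt_two_mul_self :
    ((1 / Real.sqrt 2 : ℝ) : ℂ) * ((1 / Real.sqrt 2 : ℝ) : ℂ) = 1 / 2 := by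
  rw [← Complex.ofReal_mul, ← sq, div_pow, one_pow, Real.sq_sqrt zero_le_two]; norm_num

lemma kronecker_one_mulVec_ketPhi (P : Matrix (Fin 2) (Fin 2) ℂ) :
    (P ⊗ₖ (1 : Matrix (Fin 2) (Fin 2) ℂ)) *ᵥ ketPhi
      = ((1 / Real.sqrt 2 : ℝ) : ℂ) • fun p => P p.1 p.2 := by
  ext ⟨a, b⟩
  fin_cases b <;> simp [ketPhi, tens, e0, e1, Matrix.mulVec, dotProduct, kroneckerMap_apply,
    Fintype.sum_prod_type, Fin.sum_univ_two, Matrix.one_apply, mul_comm]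

lemma braI_smul (c : ℂ) (v : Fin 2 × Fin 2 → ℂ) : braI (c • v) = star c • braI v := by
  ext i p
  simp [braI]

lemma braI_mul_kronecker_mul_conjTranspose (P φ : Matrix (Fin 2) (Fin 2) ℂ)
    (ρ : Matrix (Fin 2 × Fin 2) (Fin 2 × Fin 2) ℂ) :
    braI (fun p => P p.1 p.2) * (φ ⊗ₖ ρ) * (braI fun p => P p.1 p.2)ᴴ
      = choiMap ρ (Pᴴ * φ * P) := by
  ext c c'
  simp only [Matrix.mul_apply, conjTranspose_apply, braI, of_apply, kroneckerMap_apply, choiMap,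
    Fintype.sum_prod_type, Fin.sum_univ_two, star_mul', star_star]
  fin_cases c <;> fin_cases c' <;> simp <;> ring

lemma Kmat_mul_kronecker_mul_conjTranspose (σ : Fin 4)
    (ρ : Matrix (Fin 2 × Fin 2) (Fin 2 × Fin 2) ℂ) (φ : Matrix (Fin 2) (Fin 2) ℂ) :
    Kmat σ * (φ ⊗ₖ ρ) * (Kmat σ)ᴴ
      = (1 / 2 : ℂ) • (pauli σ * choiMap ρ ((pauli σ)ᴴ * φ * pauli σ) * (pauli σ)ᴴ) := by
  rw [Kmat, bell, kronecker_one_mulVec_ketPhi, braI_smul, Complex.star_def, Complex.conj_ofReal,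
    ← braI_mul_kronecker_mul_conjTranspose, conjTranspose_mul, conjTranspose_smul,
    Complex.star_def, Complex.conj_ofReal, Matrix.mul_smul, Matrix.smul_mul, Matrix.smul_mul,
    Matrix.smul_mul, Matrix.mul_smul, smul_smul, ofReal_inv_sqrt_two_mul_self]
  simp only [Matrix.mul_assoc]

lemma Etel_eq_sum_choiMap (ρ : Matrix (Fin 2 × Fin 2) (Fin 2 × Fin 2) ℂ)
    (φ : Matrix (Fin 2) (Fin 2) ℂ) :
    Etel ρ φ = (1 / 2 : ℂ) •
      ∑ σ, pauli σ * choiMap ρ ((pauli σ)ᴴ * φ * pauli σ) * (pauli σ)ᴴ := by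
  simp only [Etel, Kmat_mul_kronecker_mul_conjTranspose, Finset.smul_sum]

lemma choiMap_PhiKD (k : ℝ) (ψ : Matrix (Fin 2) (Fin 2) ℂ) :
    choiMap (PhiKD k) ψ
      = (1 / (1 + k ^ 2) : ℂ) • (!![1, 0; 0, (k : ℂ)] * ψ * !![1, 0; 0, (k : ℂ)]) := by
  have hnorm : ((Real.sqrt (1 + k ^ 2) : ℝ) : ℂ)⁻¹ ^ 2 = (1 + (k : ℂ) ^ 2)⁻¹ := by
    rw [inv_pow, ← Complex.ofReal_pow, Real.sq_sqrt (by positivity)]; push_cast; rfl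
  rw [Matrix.eta_fin_two ψ]
  ext c c'
  fin_cases c <;> fin_cases c' <;>
    simp [choiMap, PhiKD, dens, ketPhiK, vecMulVec_apply, tens, e0, e1, Fin.sum_univ_two] <;>
    rw [← hnorm] <;> ring

lemma pauli_conjTranspose (σ : Fin 4) : (pauli σ)ᴴ = pauli σ := by
  fin_cases σ <;> ext i j <;> fin_cases i <;> fin_cases j <;> simp [pauli, Xm, Ym, Zm]

lemma sum_pauli_conj_diag_conj (k : ℂ) (φ : Matrix (Fin 2) (Fin 2) ℂ) :
    ∑ σ, pauli σ * (!![1, 0; 0, k] * ((pauli σ)ᴴ * φ * pauli σ) * !![1, 0; 0, k]) * (pauli σ)ᴴ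
      = (1 + k) ^ 2 • φ + (1 - k) ^ 2 • (Zm * φ * Zm) := by
  rw [Matrix.eta_fin_two φ]
  simp only [pauli_conjTranspose, Fin.sum_univ_four]
  simp [pauli, Xm, Ym, Zm]
  grind [Complex.I_sq]

lemma Etel_PhiKD (k : ℝ) (φ : Matrix (Fin 2) (Fin 2) ℂ) :
    Etel (PhiKD k) φ = ((1 + k) ^ 2 / (2 * (1 + k ^ 2)) : ℂ) • φ
      + ((1 - k) ^ 2 / (2 * (1 + k ^ 2)) : ℂ) • (Zm * φ * Zm) := by
  have hk : (1 + (k : ℂ) ^ 2) ≠ 0 := by exact_mod_cast (by positivity : (1 + k ^ 2 : ℝ) ≠ 0)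
  simp only [Etel_eq_sum_choiMap, choiMap_PhiKD, Matrix.smul_mul, Matrix.mul_smul,
    ← Finset.smul_sum, sum_pauli_conj_diag_conj, smul_add, smul_smul]
  congr 2 <;> field_simp

lemma conj_mix_unitary {n : Type*} [Fintype n] [DecidableEq n] {U : Matrix n n ℂ}
    (hU : U ∈ unitaryGroup n ℂ) (p q : ℂ) (P ρ : Matrix n n ℂ) :
    U * (p • (Uᴴ * ρ * U) + q • (P * (Uᴴ * ρ * U) * P)) * Uᴴ
      = p • ρ + q • ((U * P * Uᴴ) * ρ * (U * P * Uᴴ)) := by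
  have hUU : U * Uᴴ = 1 := mem_unitaryGroup_iff.mp hU
  have h_id : U * (Uᴴ * ρ * U) * Uᴴ = ρ := by
    rw [← Matrix.mul_assoc, ← Matrix.mul_assoc, hUU, Matrix.one_mul, Matrix.mul_assoc, hUU,
      Matrix.mul_one]
  have h_P : U * (P * (Uᴴ * ρ * U) * P) * Uᴴ = (U * P * Uᴴ) * ρ * (U * P * Uᴴ) := by
    simp only [Matrix.mul_assoc]
  rw [Matrix.mul_add, Matrix.add_mul, Matrix.mul_smul, Matrix.mul_smul, Matrix.smul_mul,
    Matrix.smul_mul, h_id, h_P]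

lemma Hm_mul_mul_conjTranspose (A : Matrix (Fin 2) (Fin 2) ℂ) :
    Hm * A * Hmᴴ = (1 / 2 : ℂ) • (!![1, 1; 1, -1] * A * !![1, 1; 1, -1]) := by
  have h : (!![1, 1; 1, -1] : Matrix (Fin 2) (Fin 2) ℂ)ᴴ = !![1, 1; 1, -1] := by
    ext i j; fin_cases i <;> fin_cases j <;> simp
  rw [Hm, conjTranspose_smul, h, Complex.star_def, Complex.conj_ofReal, Matrix.smul_mul,
    Matrix.smul_mul, Matrix.mul_smul, smul_smul, ofReal_inv_sqrt_two_mul_self]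

lemma Hm_mem_unitaryGroup : Hm ∈ unitaryGroup (Fin 2) ℂ := by
  have h := Hm_mul_mul_conjTranspose 1
  rw [Matrix.mul_one, Matrix.mul_one] at h
  rw [mem_unitaryGroup_iff, star_eq_conjTranspose, h]
  ext i j; fin_cases i <;> fin_cases j <;> norm_num

lemma Hm_mul_Zm_mul_conjTranspose : Hm * Zm * Hmᴴ = Xm := by
  rw [Hm_mul_mul_conjTranspose]
  ext i j; fin_cases i <;> fin_cases j <;> norm_num [Zm, Xm]

lemma Sm_mem_unitaryGroup : Sm ∈ unitaryGroup (Fin 2) ℂ := by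
  rw [mem_unitaryGroup_iff]
  ext i j; fin_cases i <;> fin_cases j <;> simp [Sm, Matrix.mul_apply, Fin.sum_univ_two]

lemma Sm_mul_Xm_mul_conjTranspose : Sm * Xm * Smᴴ = Ym := by
  ext i j; fin_cases i <;> fin_cases j <;> simp [Sm, Ym, Xm, Matrix.mul_apply, Fin.sum_univ_two]

lemma SmHm_mul_Zm_mul_conjTranspose : (Sm * Hm) * Zm * (Sm * Hm)ᴴ = Ym := by
  rw [conjTranspose_mul, ← Sm_mul_Xm_mul_conjTranspose, ← Hm_mul_Zm_mul_conjTranspose]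
  simp only [Matrix.mul_assoc]

lemma dens_eb_zero : dens (eb 0) = !![1, 0; 0, 0] := by
  ext i j; fin_cases i <;> fin_cases j <;> simp [dens, eb, e0, vecMulVec_apply]

lemma dens_eb_one : dens (eb 1) = !![0, 0; 0, 1] := by
  ext i j; fin_cases i <;> fin_cases j <;> simp [dens, eb, e1, vecMulVec_apply]

lemma sum_trace_smul_Xm_dens_eb (ρ : Matrix (Fin 2) (Fin 2) ℂ) :
    ∑ j : Fin 2, (dens (eb j) * ρ).trace • (Xm * dens (eb j) * Xm)
      = !![ρ 1 1, 0; 0, ρ 0 0] := by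
  rw [Fin.sum_univ_two, dens_eb_zero, dens_eb_one, Matrix.eta_fin_two ρ]
  simp [Xm, Matrix.trace_fin_two]

lemma Xm_conj_add_Ym_conj (ρ : Matrix (Fin 2) (Fin 2) ℂ) :
    Xm * ρ * Xm + Ym * ρ * Ym = (2 : ℂ) • !![ρ 1 1, 0; 0, ρ 0 0] := by
  rw [Matrix.eta_fin_two ρ]
  simp [Xm, Ym]
  grind [Complex.I_sq]

/-- Quasiprobability decomposition of the identity via NME teleportation. -/
theorem qpd_identity_via_nme_teleportation (k : ℝ) (hk : 0 ≤ k)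
    (ρ : Matrix (Fin 2) (Fin 2) ℂ) :
    ρ = (((k ^ 2 + 1) / (k + 1) ^ 2 : ℝ) : ℂ) •
          (Hm * Etel (PhiKD k) (Hmᴴ * ρ * Hm) * Hmᴴ
            + (Sm * Hm) * Etel (PhiKD k) ((Sm * Hm)ᴴ * ρ * (Sm * Hm)) * (Sm * Hm)ᴴ)
        - (((k - 1) ^ 2 / (k + 1) ^ 2 : ℝ) : ℂ) •
            ∑ j : Fin 2, (dens (eb j) * ρ).trace • (Xm * dens (eb j) * Xm) := by
  rw [Etel_PhiKD, Etel_PhiKD, conj_mix_unitary Hm_mem_unitaryGroup,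
    conj_mix_unitary (mul_mem Sm_mem_unitaryGroup Hm_mem_unitaryGroup),
    Hm_mul_Zm_mul_conjTranspose, SmHm_mul_Zm_mul_conjTranspose, sum_trace_smul_Xm_dens_eb]
  have hk1 : (k : ℂ) + 1 ≠ 0 := by exact_mod_cast (by positivity : k + 1 ≠ 0)
  have hk2 : 1 + (k : ℂ) ^ 2 ≠ 0 := by exact_mod_cast (by positivity : 1 + k ^ 2 ≠ 0)
  set c : ℂ := (((k ^ 2 + 1) / (k + 1) ^ 2 : ℝ) : ℂ) with hc
  have h_id : c * (2 * ((1 + k) ^ 2 / (2 * (1 + k ^ 2)))) = 1 := by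
    rw [hc]; push_cast; field_simp; ring
  have h_flip : c * (2 * ((1 - k) ^ 2 / (2 * (1 + k ^ 2))))
      = (((k - 1) ^ 2 / (k + 1) ^ 2 : ℝ) : ℂ) := by
    rw [hc]; push_cast; field_simp; ring
  linear_combination (norm := module)
    (-c * ((1 - k) ^ 2 / (2 * (1 + k ^ 2)))) • Xm_conj_add_Ym_conj ρ - h_id • ρ
      - h_flip • !![ρ 1 1, 0; 0, ρ 0 0]
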